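/- Let p, q be positive integers with gcd(p, q) = 1, and let T_{p,q} = ⟨a, b ∣ aᵖ = b^q⟩. The quotient of T_{p,q} by the normal closure of the image of aᵖ is isomorphic to the free product (ℤ/pℤ) ∗ (ℤ/qℤ). -/

import Mathlib

/-!
Killing `aᵖ` in `⟨a, b ∣ aᵖ = b^q⟩` also kills `b^q`, so the quotient is `⟨a, b ∣ aᵖ, b^q⟩`,
whose universal property is exactly that of `(ℤ/pℤ) ∗ (ℤ/qℤ)`. The isomorphism is built from
the two lifts, and both composites are the identity because they fix the generators.
-/

/-- Relator of the toric link group `T_{p,q} = ⟨a, b ∣ aᵖ = b^q⟩`, with `a = 0`, `b = 1`. -/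
def toricRels (p q : ℕ) : Set (FreeGroup (Fin 2)) :=
  {FreeGroup.of 0 ^ p * (FreeGroup.of 1 ^ q)⁻¹}

section CyclicLift

variable {G : Type*} [Group G] {n : ℕ}

def zmodPowHom (x : G) (hx : x ^ n = 1) : Multiplicative (ZMod n) →* G :=
  AddMonoidHom.toMultiplicativeLeft <| ZMod.lift n
    ⟨zmultiplesHom (Additive G) (Additive.ofMul x), by
      simpa [← ofMul_pow] using congrArg Additive.ofMul hx⟩

@[simp]
lemma zmodPowHom_ofAdd_one (x : G) (hx : x ^ n = 1) :
    zmodPowHom x hx (Multiplicative.ofAdd 1) = x := by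
  simpa [zmodPowHom] using congrArg Additive.toMul
    (ZMod.lift_coe n ⟨zmultiplesHom (Additive G) (Additive.ofMul x), _⟩ 1)

lemma ZMod.monoidHom_ext_multiplicative {f g : Multiplicative (ZMod n) →* G}
    (h : f (Multiplicative.ofAdd 1) = g (Multiplicative.ofAdd 1)) : f = g := by
  refine MonoidHom.ext fun z => ?_
  obtain ⟨k, hk⟩ := ZMod.intCast_surjective (Multiplicative.toAdd z)
  have hz : z = Multiplicative.ofAdd (1 : ZMod n) ^ k := by
    rw [← ofAdd_zsmul, zsmul_one, hk, ofAdd_toAdd]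
  rw [hz, map_zpow, map_zpow, h]

@[simp]
lemma ZMod.ofAdd_one_pow_self (n : ℕ) : Multiplicative.ofAdd (1 : ZMod n) ^ n = 1 := by
  rw [← ofAdd_nsmul, nsmul_one, ZMod.natCast_self, ofAdd_zero]

end CyclicLift

abbrev ToricQuotient (p q : ℕ) : Type :=
  PresentedGroup (toricRels p q) ⧸
    Subgroup.normalClosure {(PresentedGroup.of 0 : PresentedGroup (toricRels p q)) ^ p}

namespace ToricQuotient

variable {p q : ℕ} {H : Type*} [Group H]

def of (i : Fin 2) : ToricQuotient p q :=
  QuotientGroup.mk (PresentedGroup.of i)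

lemma of_zero_pow : (of 0 : ToricQuotient p q) ^ p = 1 := by
  rw [of, ← QuotientGroup.mk_pow, QuotientGroup.eq_one_iff]
  exact Subgroup.subset_normalClosure rfl

lemma of_one_pow : (of 1 : ToricQuotient p q) ^ q = 1 := by
  have hrel : (PresentedGroup.of 0 : PresentedGroup (toricRels p q)) ^ p =
      PresentedGroup.of 1 ^ q := by
    have := PresentedGroup.one_of_mem (rels := toricRels p q) rfl
    rwa [map_mul, map_inv, map_pow, map_pow, mul_inv_eq_one] at this
  rw [of, ← QuotientGroup.mk_pow, ← hrel, QuotientGroup.mk_pow]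
  exact of_zero_pow

lemma lift_toricRels_eq_one (f : Fin 2 → H) (h₀ : f 0 ^ p = 1) (h₁ : f 1 ^ q = 1) :
    ∀ r ∈ toricRels p q, FreeGroup.lift f r = 1 := by
  rintro r rfl
  simp [h₀, h₁]

def lift (f : Fin 2 → H) (h₀ : f 0 ^ p = 1) (h₁ : f 1 ^ q = 1) : ToricQuotient p q →* H :=
  QuotientGroup.lift _ (PresentedGroup.toGroup (lift_toricRels_eq_one f h₀ h₁)) <|
    Subgroup.normalClosure_le_normal <| by
      rintro x rfl
      simp [PresentedGroup.toGroup.of, h₀]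

@[simp]
lemma lift_of (f : Fin 2 → H) (h₀ : f 0 ^ p = 1) (h₁ : f 1 ^ q = 1) (i : Fin 2) :
    lift f h₀ h₁ (of i) = f i :=
  PresentedGroup.toGroup.of (lift_toricRels_eq_one f h₀ h₁)

lemma hom_ext {φ ψ : ToricQuotient p q →* H} (h : ∀ i, φ (of i) = ψ (of i)) : φ = ψ :=
  QuotientGroup.monoidHom_ext _ <| PresentedGroup.ext h

end ToricQuotient

theorem stmt_10_general (p q : ℕ) :
    Nonempty
      ((PresentedGroup (toricRels p q) ⧸
          Subgroup.normalClosure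
            {(PresentedGroup.of 0 : PresentedGroup (toricRels p q)) ^ p}) ≃*
        Monoid.Coprod (Multiplicative (ZMod p)) (Multiplicative (ZMod q))) := by
  let toCoprod : ToricQuotient p q →* Monoid.Coprod (Multiplicative (ZMod p))
      (Multiplicative (ZMod q)) :=
    ToricQuotient.lift ![Monoid.Coprod.inl (.ofAdd 1), Monoid.Coprod.inr (.ofAdd 1)]
      (by simp [← map_pow]) (by simp [← map_pow])
  let ofCoprod : Monoid.Coprod (Multiplicative (ZMod p)) (Multiplicative (ZMod q)) →*
      ToricQuotient p q :=
    Monoid.Coprod.lift (zmodPowHom _ ToricQuotient.of_zero_pow)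
      (zmodPowHom _ ToricQuotient.of_one_pow)
  refine ⟨toCoprod.toMulEquiv ofCoprod ?_ ?_⟩
  · exact ToricQuotient.hom_ext fun i => by fin_cases i <;> simp [toCoprod, ofCoprod]
  · exact Monoid.Coprod.hom_ext
      (ZMod.monoidHom_ext_multiplicative (by simp [toCoprod, ofCoprod]))
      (ZMod.monoidHom_ext_multiplicative (by simp [toCoprod, ofCoprod]))

/-- The quotient of `T_{p,q}` (with `gcd(p,q) = 1`) by the normal closure of `aᵖ` is
isomorphic to the free product `(ℤ/pℤ) ∗ (ℤ/qℤ)`. -/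
theorem stmt_10 (p q : ℕ) (hp : 0 < p) (hq : 0 < q) (hpq : Nat.gcd p q = 1) :
    Nonempty
      ((PresentedGroup (toricRels p q) ⧸
          Subgroup.normalClosure
            {(PresentedGroup.of 0 : PresentedGroup (toricRels p q)) ^ p}) ≃*
        Monoid.Coprod (Multiplicative (ZMod p)) (Multiplicative (ZMod q))) :=
  stmt_10_general p q
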